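/- Let F̃ : ℂ² → ℂ² be the map F̃(x,y) = (x² + y², x³ − 3xy²). For every (a,b) ∈ ℂ², the fiber F̃⁻¹(a,b) = {(x,y) ∈ ℂ² : x² + y² = a and x³ − 3xy² = b} has exactly 6 elements if and only if a³ ≠ b²; consequently the branch locus of F̃ is the cuspidal cubic C_C = {(a,b) ∈ ℂ² : a³ = b²}. -/
import Mathlib

open Complex Set

lemma sqrt3_sq : ((Real.sqrt 3 : ℝ) : ℂ)^2 = 3 := by
  rw [← Complex.ofReal_pow, Real.sq_sqrt] <;> norm_num

noncomputable def om : ℂ := (-1 + Complex.I * Real.sqrt 3)/2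

lemma om_eq : om^2 + om + 1 = 0 := by
  unfold om
  have h := sqrt3_sq
  have hI := Complex.I_sq
  ring_nf
  linear_combination (Complex.I^2 * h + 3*hI)/4

lemma om_cube : om^3 = 1 := by
  linear_combination (om - 1) * om_eq

lemma om_ne_one : om ≠ 1 := by
  intro h; have := om_eq; rw [h] at this; norm_num at this

lemma om_ne_zero : om ≠ 0 := by
  intro h; have := om_eq; rw [h] at this; norm_num at this

lemma om_sq_ne_one : om^2 ≠ 1 := by
  intro h
  have h2 := om_eq
  rw [h] at h2
  have h3 : om = -2 := by linear_combination h2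
  rw [h3] at h; norm_num at h

lemma om_ne_om_sq : om ≠ om^2 := by
  intro h
  have : om * (om - 1) = 0 := by linear_combination -h
  rcases mul_eq_zero.mp this with h' | h'
  · exact om_ne_zero h'
  · exact om_ne_one (by linear_combination h')

lemma cube_factor (u r : ℂ) : u^3 - r^3 = (u - r) * (u - om*r) * (u - om^2*r) := by
  linear_combination (r*u^2 - r^2*u*om + r^3*(om-1)) * om_eq

/-- distinctness of `x, om*x, om^2*x` for `x ≠ 0` -/
lemma ne_om_mul (x : ℂ) (hx : x ≠ 0) : x ≠ om*x ∧ x ≠ om^2*x ∧ om*x ≠ om^2*x := by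
  refine ⟨?_, ?_, ?_⟩
  · intro h
    have h0 : (om - 1) * x = 0 := by linear_combination -h
    rcases mul_eq_zero.mp h0 with h' | h'
    · exact om_ne_one (by linear_combination h')
    · exact hx h'
  · intro h
    have h0 : (om^2 - 1) * x = 0 := by linear_combination -h
    rcases mul_eq_zero.mp h0 with h' | h'
    · exact om_sq_ne_one (by linear_combination h')
    · exact hx h'
  · intro h
    have h0 : (om - om^2) * x = 0 := by linear_combination h
    rcases mul_eq_zero.mp h0 with h' | h'
    · exact om_ne_om_sq (by linear_combination h')
    · exact hx h'

lemma six_points (a b r w : ℂ) (hr : r ≠ 0) (hrw : r * w = a)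
    (hsum : r^3 + w^3 = 2*b) (hne : r^3 ≠ w^3) :
    {p : ℂ × ℂ | p.1 * p.2 = a ∧ p.1 ^ 3 + p.2 ^ 3 = 2 * b}.ncard = 6 := by
  have key : ∀ x y : ℂ, x^3 = r^3 → y^3 = w^3 → x ≠ y := by
    intro x y hx hy hxy
    exact hne (by rw [← hx, ← hy, hxy])
  have hS : {p : ℂ × ℂ | p.1 * p.2 = a ∧ p.1 ^ 3 + p.2 ^ 3 = 2 * b} =
      {(r, w), (om*r, om^2*w), (om^2*r, om*w), (w, r), (om*w, om^2*r), (om^2*w, om*r)} := by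
    ext ⟨u, v⟩
    simp only [Set.mem_setOf_eq, Set.mem_insert_iff, Set.mem_singleton_iff, Prod.mk.injEq]
    constructor
    · rintro ⟨huv, hsum'⟩
      have huv' : u * v = r * w := by rw [huv, ← hrw]
      have h1 : u^3 * v^3 = r^3 * w^3 := by
        rw [← mul_pow, ← mul_pow, huv']
      have hfac : (u^3 - r^3) * (u^3 - w^3) = 0 := by
        linear_combination u^3*hsum' - u^3*hsum - h1
      rcases mul_eq_zero.mp hfac with hu3 | hu3
      · -- u^3 = r^3
        have hu3' : u^3 = r^3 := by linear_combination hu3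
        have hu0 : u ≠ 0 := by
          intro h
          rw [h] at hu3'
          exact hr (by
            have : r^3 = 0 := by linear_combination -hu3'
            exact pow_eq_zero_iff (by norm_num) |>.mp this)
        have hfac2 : (u - r) * (u - om*r) * (u - om^2*r) = 0 := by
          rw [← cube_factor]; exact hu3
        rcases mul_eq_zero.mp hfac2 with h' | hcase
        · rcases mul_eq_zero.mp h' with hcase | hcase
          · -- u = r
            have hu : u = r := by linear_combination hcase
            rw [hu] at huv'
            exact Or.inl ⟨hu, mul_left_cancel₀ hr huv'⟩
          · -- u = om*r
            have hu : u = om*r := by linear_combination hcase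
            rw [hu] at huv'
            have hv : v = om^2*w := by
              refine mul_left_cancel₀ (mul_ne_zero om_ne_zero hr) ?_
              rw [huv']; linear_combination -r*w*om_cube
            exact Or.inr (Or.inl ⟨hu, hv⟩)
        · -- u = om^2*r
          have hu : u = om^2*r := by linear_combination hcase
          rw [hu] at huv'
          have hv : v = om*w := by
            refine mul_left_cancel₀ (mul_ne_zero (pow_ne_zero 2 om_ne_zero) hr) ?_
            rw [huv']; linear_combination -r*w*om_cube
          exact Or.inr (Or.inr (Or.inl ⟨hu, hv⟩))
      · -- u^3 = w^3
        have hu3' : u^3 = w^3 := by linear_combination hu3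
        by_cases hw0 : w = 0
        · -- then u = 0, and v^3 = r^3
          have hu : u = 0 := by
            have : u^3 = 0 := by rw [hu3', hw0]; ring
            exact pow_eq_zero_iff (by norm_num) |>.mp this
          have hv3 : v^3 - r^3 = 0 := by
            rw [hw0] at hsum
            rw [hu] at hsum'
            linear_combination hsum' - hsum
          have hfac2 : (v - r) * (v - om*r) * (v - om^2*r) = 0 := by
            rw [← cube_factor]; exact hv3
          rcases mul_eq_zero.mp hfac2 with h' | hcase
          · rcases mul_eq_zero.mp h' with hcase | hcase
            · exact Or.inr (Or.inr (Or.inr (Or.inl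
                ⟨by rw [hu, hw0], by linear_combination hcase⟩)))
            · exact Or.inr (Or.inr (Or.inr (Or.inr (Or.inr
                ⟨by rw [hu, hw0]; ring, by linear_combination hcase⟩))))
          · exact Or.inr (Or.inr (Or.inr (Or.inr (Or.inl
              ⟨by rw [hu, hw0]; ring, by linear_combination hcase⟩))))
        · have hu0 : u ≠ 0 := by
            intro h
            rw [h] at hu3'
            exact hw0 (by
              have : w^3 = 0 := by linear_combination -hu3'
              exact pow_eq_zero_iff (by norm_num) |>.mp this)
          have huv'' : u * v = w * r := by rw [huv']; ring
          have hfac2 : (u - w) * (u - om*w) * (u - om^2*w) = 0 := by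
            rw [← cube_factor]
            linear_combination hu3'
          rcases mul_eq_zero.mp hfac2 with h' | hcase
          · rcases mul_eq_zero.mp h' with hcase | hcase
            · have hu : u = w := by linear_combination hcase
              rw [hu] at huv''
              exact Or.inr (Or.inr (Or.inr (Or.inl ⟨hu, mul_left_cancel₀ hw0 huv''⟩)))
            · have hu : u = om*w := by linear_combination hcase
              rw [hu] at huv''
              have hv : v = om^2*r := by
                refine mul_left_cancel₀ (mul_ne_zero om_ne_zero hw0) ?_
                rw [huv'']; linear_combination -w*r*om_cube
              exact Or.inr (Or.inr (Or.inr (Or.inr (Or.inl ⟨hu, hv⟩))))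
          · have hu : u = om^2*w := by linear_combination hcase
            rw [hu] at huv''
            have hv : v = om*r := by
              refine mul_left_cancel₀ (mul_ne_zero (pow_ne_zero 2 om_ne_zero) hw0) ?_
              rw [huv'']; linear_combination -w*r*om_cube
            exact Or.inr (Or.inr (Or.inr (Or.inr (Or.inr ⟨hu, hv⟩))))
    · rintro (⟨h1, h2⟩ | ⟨h1, h2⟩ | ⟨h1, h2⟩ | ⟨h1, h2⟩ | ⟨h1, h2⟩ | ⟨h1, h2⟩) <;>
        subst h1 <;> subst h2 <;> constructor
      · exact hrw
      · exact hsum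
      · linear_combination r*w*om_cube + hrw
      · linear_combination (r^3)*om_cube + (om^3+1)*w^3*om_cube + hsum
      · linear_combination r*w*om_cube + hrw
      · linear_combination (w^3)*om_cube + (om^3+1)*r^3*om_cube + hsum
      · linear_combination hrw
      · linear_combination hsum
      · linear_combination r*w*om_cube + hrw
      · linear_combination (w^3)*om_cube + (om^3+1)*r^3*om_cube + hsum
      · linear_combination r*w*om_cube + hrw
      · linear_combination (r^3)*om_cube + (om^3+1)*w^3*om_cube + hsum
  rw [hS]
  obtain ⟨hr1, hr2, hr3⟩ := ne_om_mul r hr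
  have kr : (r:ℂ)^3 = r^3 := rfl
  have c1 : r ≠ w := key r w rfl rfl
  have c2 : r ≠ om*w := key r (om*w) rfl (by linear_combination w^3*om_cube)
  have c3 : r ≠ om^2*w := key r (om^2*w) rfl (by linear_combination (om^3+1)*w^3*om_cube)
  have c4 : om*r ≠ w := key (om*r) w (by linear_combination r^3*om_cube) rfl
  have c5 : om*r ≠ om*w := key (om*r) (om*w) (by linear_combination r^3*om_cube)
    (by linear_combination w^3*om_cube)
  have c6 : om*r ≠ om^2*w := key (om*r) (om^2*w) (by linear_combination r^3*om_cube)
    (by linear_combination (om^3+1)*w^3*om_cube)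
  have c7 : om^2*r ≠ w := key (om^2*r) w (by linear_combination (om^3+1)*r^3*om_cube) rfl
  have c8 : om^2*r ≠ om*w := key (om^2*r) (om*w)
    (by linear_combination (om^3+1)*r^3*om_cube) (by linear_combination w^3*om_cube)
  have c9 : om^2*r ≠ om^2*w := key (om^2*r) (om^2*w)
    (by linear_combination (om^3+1)*r^3*om_cube) (by linear_combination (om^3+1)*w^3*om_cube)
  rw [Set.ncard_insert_of_notMem (by
    simp only [Set.mem_insert_iff, Set.mem_singleton_iff, Prod.mk.injEq, not_or]
    push_neg
    exact ⟨fun h => absurd h hr1, fun h => absurd h hr2, fun h => absurd h c1,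
      fun h => absurd h c2, fun h => absurd h c3⟩)]
  rw [Set.ncard_insert_of_notMem (by
    simp only [Set.mem_insert_iff, Set.mem_singleton_iff, Prod.mk.injEq, not_or]
    push_neg
    exact ⟨fun h => absurd h hr3, fun h => absurd h c4, fun h => absurd h c5,
      fun h => absurd h c6⟩)]
  rw [Set.ncard_insert_of_notMem (by
    simp only [Set.mem_insert_iff, Set.mem_singleton_iff, Prod.mk.injEq, not_or]
    push_neg
    exact ⟨fun h => absurd h c7, fun h => absurd h c8, fun h => absurd h c9⟩)]
  rw [Set.ncard_insert_of_notMem (by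
    simp only [Set.mem_insert_iff, Set.mem_singleton_iff, Prod.mk.injEq, not_or]
    push_neg
    exact ⟨fun _ => hr2, fun _ => hr1⟩)]
  rw [Set.ncard_insert_of_notMem (by
    simp only [Set.mem_singleton_iff, Prod.mk.injEq, not_and]
    exact fun _ => (ne_om_mul r hr).2.2.symm)]
  rw [Set.ncard_singleton]

lemma count_card (a b : ℂ) (h : a^3 ≠ b^2) :
    {p : ℂ × ℂ | p.1 * p.2 = a ∧ p.1 ^ 3 + p.2 ^ 3 = 2 * b}.ncard = 6 := by
  by_cases ha : a = 0
  · subst ha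
    have hb : b ≠ 0 := by
      intro hb; rw [hb] at h; simp at h
    obtain ⟨r, hr3⟩ := IsAlgClosed.exists_pow_nat_eq (2*b) (n := 3) (by norm_num)
    have hr : r ≠ 0 := by
      intro h0; rw [h0] at hr3
      have : (2:ℂ)*b = 0 := by rw [← hr3]; ring
      simp at this; exact hb this
    exact six_points 0 b r 0 hr (by ring) (by rw [hr3]; ring)
      (by rw [hr3]; intro h'; exact hb (by linear_combination h'/2))
  · obtain ⟨s, hs⟩ := IsAlgClosed.exists_pow_nat_eq (b^2 - a^3) (n := 2) (by norm_num)
    have hs0 : s ≠ 0 := by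
      intro h0; rw [h0] at hs
      exact h (by linear_combination hs)
    obtain ⟨r, hr3⟩ := IsAlgClosed.exists_pow_nat_eq (b + s) (n := 3) (by norm_num)
    have hbs : (b + s) * (b - s) = a^3 := by linear_combination -hs
    have hr : r ≠ 0 := by
      intro h0; rw [h0] at hr3
      have hbs0 : b + s = 0 := by linear_combination -hr3
      rw [hbs0, zero_mul] at hbs
      exact ha (pow_eq_zero_iff (n := 3) (by norm_num) |>.mp hbs.symm)
    refine six_points a b r (a/r) hr (by field_simp) ?_ ?_
    · have : (a/r)^3 = b - s := by
        field_simp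
        rw [hr3]
        linear_combination -hbs
      rw [this, hr3]; ring
    · rw [hr3]
      intro h'
      have : (a/r)^3 = b - s := by
        field_simp
        rw [hr3]
        linear_combination -hbs
      rw [this] at h'
      exact hs0 (by linear_combination h'/2)

lemma le_three (a b : ℂ) (h : a^3 = b^2) :
    {p : ℂ × ℂ | p.1 * p.2 = a ∧ p.1 ^ 3 + p.2 ^ 3 = 2 * b}.ncard ≤ 3 := by
  by_cases hb : b = 0
  · subst hb
    have ha : a = 0 := by
      have : a^3 = 0 := by rw [h]; ring
      exact pow_eq_zero_iff (by norm_num) |>.mp this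
    subst ha
    have hsub : {p : ℂ × ℂ | p.1 * p.2 = 0 ∧ p.1 ^ 3 + p.2 ^ 3 = 2 * 0} ⊆ {((0:ℂ), (0:ℂ))} := by
      rintro ⟨u, v⟩ ⟨huv, hsum⟩
      simp only [Set.mem_singleton_iff, Prod.mk.injEq]
      rcases mul_eq_zero.mp huv with h0 | h0
      · refine ⟨h0, ?_⟩
        rw [h0] at hsum
        have : v^3 = 0 := by linear_combination hsum
        exact pow_eq_zero_iff (by norm_num) |>.mp this
      · refine ⟨?_, h0⟩
        rw [h0] at hsum
        have : u^3 = 0 := by linear_combination hsum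
        exact pow_eq_zero_iff (by norm_num) |>.mp this
    calc _ ≤ ({((0:ℂ), (0:ℂ))} : Set (ℂ × ℂ)).ncard := Set.ncard_le_ncard hsub (by simp)
    _ ≤ 3 := by rw [Set.ncard_singleton]; norm_num
  · have hb3 : b^2 ≠ 0 := pow_ne_zero 2 hb
    obtain ⟨r, hr3⟩ := IsAlgClosed.exists_pow_nat_eq b (n := 3) (by norm_num)
    have hr : r ≠ 0 := by
      intro h0; rw [h0] at hr3; exact hb (by linear_combination -hr3)
    have hsub : {p : ℂ × ℂ | p.1 * p.2 = a ∧ p.1 ^ 3 + p.2 ^ 3 = 2 * b} ⊆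
        {(r, a/r), (om*r, a/(om*r)), (om^2*r, a/(om^2*r))} := by
      rintro ⟨u, v⟩ ⟨huv, hsum⟩
      have h1 : u^3 * v^3 = b^2 := by rw [← mul_pow, huv, ← h]
      have hsq : (u^3 - b)^2 = 0 := by linear_combination u^3*hsum - h1
      have hu3 : u^3 = b := by
        have := pow_eq_zero_iff (n := 2) (by norm_num) |>.mp hsq
        linear_combination this
      have hu0 : u ≠ 0 := by
        intro h0; rw [h0] at hu3; exact hb (by linear_combination -hu3)
      have hv : v = a/u := by field_simp [hu0]; linear_combination huv
      have hfac : (u - r) * (u - om*r) * (u - om^2*r) = 0 := by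
        rw [← cube_factor, hu3, hr3]; ring
      simp only [Set.mem_insert_iff, Set.mem_singleton_iff, Prod.mk.injEq]
      rcases mul_eq_zero.mp hfac with h' | hc
      · rcases mul_eq_zero.mp h' with hc | hc
        · have hu : u = r := by linear_combination hc
          exact Or.inl ⟨hu, by rw [hv, hu]⟩
        · have hu : u = om*r := by linear_combination hc
          exact Or.inr (Or.inl ⟨hu, by rw [hv, hu]⟩)
      · have hu : u = om^2*r := by linear_combination hc
        exact Or.inr (Or.inr ⟨hu, by rw [hv, hu]⟩)
    calc _ ≤ ({(r, a/r), (om*r, a/(om*r)), (om^2*r, a/(om^2*r))} : Set (ℂ × ℂ)).ncard :=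
        Set.ncard_le_ncard hsub (by
          apply Set.Finite.insert; apply Set.Finite.insert; exact Set.finite_singleton _)
    _ ≤ 2 + 1 := le_trans (Set.ncard_insert_le _ _)
        (by gcongr; exact le_trans (Set.ncard_insert_le _ _) (by simp))
    _ ≤ 3 := by norm_num

noncomputable def ee : (ℂ × ℂ) ≃ (ℂ × ℂ) where
  toFun p := (p.1 + Complex.I * p.2, p.1 - Complex.I * p.2)
  invFun q := ((q.1 + q.2)/2, (q.1 - q.2)/(2*Complex.I))
  left_inv p := by
    have hI := Complex.I_ne_zero
    ext
    · simp only; ring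
    · simp only; field_simp; ring
  right_inv q := by
    have hI := Complex.I_ne_zero
    have hI2 := Complex.I_sq
    ext
    · simp only; field_simp; ring_nf
    · simp only; field_simp; ring_nf

lemma transfer (a b : ℂ) :
    {xy : ℂ × ℂ | xy.1 ^ 2 + xy.2 ^ 2 = a ∧
        xy.1 ^ 3 - 3 * xy.1 * xy.2 ^ 2 = b}.ncard
      = {p : ℂ × ℂ | p.1 * p.2 = a ∧ p.1 ^ 3 + p.2 ^ 3 = 2 * b}.ncard := by
  have hpre : {xy : ℂ × ℂ | xy.1 ^ 2 + xy.2 ^ 2 = a ∧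
      xy.1 ^ 3 - 3 * xy.1 * xy.2 ^ 2 = b}
      = ee ⁻¹' {p : ℂ × ℂ | p.1 * p.2 = a ∧ p.1 ^ 3 + p.2 ^ 3 = 2 * b} := by
    ext ⟨x, y⟩
    simp only [Set.mem_preimage, Set.mem_setOf_eq, ee, Equiv.coe_fn_mk]
    constructor
    · rintro ⟨h1, h2⟩
      constructor
      · linear_combination h1 - y^2*Complex.I_sq
      · linear_combination 2*h2 + 6*x*y^2*Complex.I_sq
    · rintro ⟨h1, h2⟩
      constructor
      · linear_combination h1 + y^2*Complex.I_sq
      · linear_combination h2/2 - 3*x*y^2*Complex.I_sq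
  have h2 : ee ⁻¹' {p : ℂ × ℂ | p.1 * p.2 = a ∧ p.1 ^ 3 + p.2 ^ 3 = 2 * b}
      = ee.symm '' {p : ℂ × ℂ | p.1 * p.2 = a ∧ p.1 ^ 3 + p.2 ^ 3 = 2 * b} := by
    rw [Equiv.image_eq_preimage_symm, Equiv.symm_symm]
  rw [hpre, h2]
  exact Set.ncard_image_of_injective _ (Equiv.injective _)

theorem branch_locus_of_quotient_map :
    (∀ a b : ℂ,
      ({xy : ℂ × ℂ | xy.1 ^ 2 + xy.2 ^ 2 = a ∧
          xy.1 ^ 3 - 3 * xy.1 * xy.2 ^ 2 = b}.ncard = 6 ↔ a ^ 3 ≠ b ^ 2)) ∧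
    {ab : ℂ × ℂ |
        {xy : ℂ × ℂ | xy.1 ^ 2 + xy.2 ^ 2 = ab.1 ∧
          xy.1 ^ 3 - 3 * xy.1 * xy.2 ^ 2 = ab.2}.ncard < 6}
      = {ab : ℂ × ℂ | ab.1 ^ 3 = ab.2 ^ 2} := by
  constructor
  · intro a b
    rw [transfer a b]
    constructor
    · intro h6 heq
      have := le_three a b heq
      omega
    · exact count_card a b
  · ext ⟨a, b⟩
    simp only [Set.mem_setOf_eq]
    rw [transfer a b]
    constructor
    · intro hlt
      by_contra hne
      rw [count_card a b hne] at hlt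
      omega
    · intro heq
      have := le_three a b heq
      omega
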